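/- Let $Q_0 \subset \mathbb{R}^n$ be a cube and $f \in L^1(Q_0)$. If there exists a constant $C$ such that $\frac{1}{|Q|}\int_Q \big| |f(x)| - f_Q \big| \, dx \leq C$ for all subcubes $Q \subset Q_0$, then $\frac{1}{|Q|}\int_Q \big| f(x) - |f|_Q \big| \, dx \leq 3C$ for all subcubes $Q \subset Q_0$. -/

import Mathlib

/-!
Write `a = f_Q`, `b = |f|_Q` and `D` for the mean oscillation of `|f|` about `a`. Averaging
`|f| - a` gives `|b - a| ≤ D`. Pointwise `|f - b| ≤ (|f| - f) + ||f| - a| + |a - b|`, and the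
first term averages to `b - a`, so the mean oscillation of `f` about `b` is at most `3 D`.
-/

open MeasureTheory

/-- The axis-parallel cube centered at `x` with side length `2 * ρ`. -/
def cube (n : ℕ) (x : Fin n → ℝ) (ρ : ℝ) : Set (Fin n → ℝ) := {y | ∀ i, |y i - x i| ≤ ρ}

section ProbabilityMeasure

variable {α : Type*} [MeasurableSpace α] {μ : Measure α} [IsProbabilityMeasure μ] {f : α → ℝ}

lemma abs_integral_sub_le_integral_abs_sub (hf : Integrable f μ) (c : ℝ) :
    |∫ x, f x ∂μ - c| ≤ ∫ x, |f x - c| ∂μ := by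
  have hsub : ∫ x, (f x - c) ∂μ = ∫ x, f x ∂μ - c := by
    rw [integral_sub hf (integrable_const c), integral_const, probReal_univ, one_smul]
  rw [← hsub]
  exact abs_integral_le_integral_abs

lemma integral_abs_sub_integral_abs_le (hf : Integrable f μ) :
    ∫ x, |f x - ∫ y, |f y| ∂μ| ∂μ ≤ 3 * ∫ x, |(|f x| - ∫ y, f y ∂μ)| ∂μ := by
  set a := ∫ y, f y ∂μ
  set b := ∫ y, |f y| ∂μ
  set D := ∫ x, |(|f x| - a)| ∂μ
  have hba : |b - a| ≤ D := abs_integral_sub_le_integral_abs_sub hf.abs a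
  have hpt : ∀ x, |f x - b| ≤ (|f x| - f x) + |(|f x| - a)| + |a - b| := fun x =>
    calc |f x - b| = |(f x - |f x|) + (|f x| - a) + (a - b)| := by congr 1; ring
      _ ≤ |(f x - |f x|)| + |(|f x| - a)| + |a - b| := abs_add_three _ _ _
      _ = (|f x| - f x) + |(|f x| - a)| + |a - b| := by
        rw [abs_sub_comm, abs_of_nonneg (sub_nonneg.2 (le_abs_self _))]
  have hI₁ : Integrable (fun x => |f x| - f x) μ := hf.abs.sub hf
  have hI₂ : Integrable (fun x => |(|f x| - a)|) μ := (hf.abs.sub (integrable_const a)).abs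
  have hI₁₂ : Integrable (fun x => (|f x| - f x) + |(|f x| - a)|) μ := hI₁.add hI₂
  calc ∫ x, |f x - b| ∂μ
      ≤ ∫ x, ((|f x| - f x) + |(|f x| - a)| + |a - b|) ∂μ :=
        integral_mono ((hf.sub (integrable_const b)).abs)
          (hI₁₂.add (integrable_const _)) hpt
    _ = (b - a) + D + |a - b| := by
        rw [integral_add hI₁₂ (integrable_const _), integral_add hI₁ hI₂,
          integral_sub hf.abs hf, integral_const, probReal_univ, one_smul]
    _ ≤ 3 * D := by linarith [le_abs_self (b - a), abs_sub_comm a b]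

end ProbabilityMeasure

lemma average_abs_sub_average_abs_le {α : Type*} [MeasurableSpace α] {μ : Measure α}
    [IsFiniteMeasure μ] [NeZero μ] {f : α → ℝ} (hf : Integrable f μ) :
    ⨍ x, |f x - ⨍ y, |f y| ∂μ| ∂μ ≤ 3 * ⨍ x, |(|f x| - ⨍ y, f y ∂μ)| ∂μ := by
  simp only [average_eq']
  exact integral_abs_sub_integral_abs_le (hf.smul_measure (ENNReal.inv_ne_top.2 (NeZero.ne _)))

lemma cube_eq_closedBall (n : ℕ) (c : Fin n → ℝ) {r : ℝ} (hr : 0 ≤ r) :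
    cube n c r = Metric.closedBall c r := by
  ext y
  simp only [cube, Set.mem_ofPred_eq, Metric.mem_closedBall, dist_pi_le_iff hr, Real.dist_eq]

theorem abs_osc_implies_barL_general (n : ℕ) (x0 : Fin n → ℝ) (r0 : ℝ)
    (f : (Fin n → ℝ) → ℝ) (hf : IntegrableOn f (cube n x0 r0)) (C : ℝ)
    (hC : ∀ c r, 0 < r → cube n c r ⊆ cube n x0 r0 →
      ⨍ x in cube n c r, (abs (|f x| - ⨍ y in cube n c r, f y)) ≤ C) :
    ∀ c r, 0 < r → cube n c r ⊆ cube n x0 r0 →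
      ⨍ x in cube n c r, (abs (f x - ⨍ y in cube n c r, |f y|)) ≤ 3 * C := by
  intro c r hr hsub
  have hQ : cube n c r = Metric.closedBall c r := cube_eq_closedBall n c hr.le
  have : IsFiniteMeasure (volume.restrict (cube n c r)) :=
    isFiniteMeasure_restrict.2 (hQ ▸ measure_closedBall_lt_top.ne)
  have : NeZero (volume.restrict (cube n c r)) :=
    ⟨by simpa [Measure.restrict_eq_zero, hQ] using (Metric.measure_closedBall_pos volume c hr).ne'⟩
  calc ⨍ x in cube n c r, abs (f x - ⨍ y in cube n c r, |f y|)
      ≤ 3 * ⨍ x in cube n c r, abs (|f x| - ⨍ y in cube n c r, f y) :=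
        average_abs_sub_average_abs_le (hf.mono_set hsub)
    _ ≤ 3 * C := by gcongr; exact hC c r hr hsub

theorem abs_osc_implies_barL (n : ℕ) (x0 : Fin n → ℝ) (r0 : ℝ) (hr0 : 0 < r0)
    (f : (Fin n → ℝ) → ℝ) (hf : IntegrableOn f (cube n x0 r0)) (C : ℝ)
    (hC : ∀ c r, 0 < r → cube n c r ⊆ cube n x0 r0 →
      ⨍ x in cube n c r, (abs (|f x| - ⨍ y in cube n c r, f y)) ≤ C) :
    ∀ c r, 0 < r → cube n c r ⊆ cube n x0 r0 →
      ⨍ x in cube n c r, (abs (f x - ⨍ y in cube n c r, |f y|)) ≤ 3 * C :=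
  abs_osc_implies_barL_general n x0 r0 f hf C hC
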